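/- In the binary observation model with standard Gaussian noise, the expected log-likelihood criterion θ ↦ E[Σ_{i=1}^n log g_i(S̃ | θ^{(i)})], where S̃ = (S̄, S) is distributed according to the stationary distribution of the pair chain, is uniquely maximized at the true parameter θ*, provided the vectors {(s, 1) : s ∈ {0,1}^n} span ℝ^{n+1}. -/
import Mathlib

noncomputable def Phi (x : ℝ) : ℝ :=
  ∫ t in Set.Iic x, (Real.sqrt (2 * Real.pi))⁻¹ * Real.exp (-t ^ 2 / 2)

/-- The expected log-likelihood criterion: the expectation, under the stationary
distribution of the pair chain `π̃(s̄,s) = π(s)P(s,s̄)`, of `∑ i log g_i(s̄,s | A_i, c_i)`. -/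
noncomputable def crit {n : ℕ} (π : (Fin n → Bool) → ℝ)
    (P : (Fin n → Bool) → (Fin n → Bool) → ℝ)
    (A : Matrix (Fin n) (Fin n) ℝ) (c : Fin n → ℝ) : ℝ :=
  ∑ s : Fin n → Bool, ∑ sbar : Fin n → Bool, π s * P s sbar *
    ∑ i, (if sbar i then Real.log (1 - Phi (c i - ∑ j, A i j * (if s j then (1 : ℝ) else 0)))
          else Real.log (Phi (c i - ∑ j, A i j * (if s j then (1 : ℝ) else 0))))

section PhiLemmas
open MeasureTheory Real Set

lemma gpdf_eq : (fun t : ℝ => (Real.sqrt (2 * Real.pi))⁻¹ * Real.exp (-t ^ 2 / 2))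
    = fun t : ℝ => (Real.sqrt (2 * Real.pi))⁻¹ * Real.exp (-(1/2 : ℝ) * t ^ 2) := by
  funext t; ring_nf

lemma gpdf_integrable :
    Integrable (fun t : ℝ => (Real.sqrt (2 * Real.pi))⁻¹ * Real.exp (-t ^ 2 / 2)) := by
  rw [gpdf_eq]
  exact (integrable_exp_neg_mul_sq (by norm_num)).const_mul _

lemma gpdf_pos (t : ℝ) : 0 < (Real.sqrt (2 * Real.pi))⁻¹ * Real.exp (-t ^ 2 / 2) := by
  have : 0 < Real.sqrt (2 * Real.pi) := Real.sqrt_pos.2 (by positivity)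
  positivity

lemma gpdf_integral : ∫ t : ℝ, (Real.sqrt (2 * Real.pi))⁻¹ * Real.exp (-t ^ 2 / 2) = 1 := by
  rw [gpdf_eq, MeasureTheory.integral_const_mul, integral_gaussian]
  rw [show Real.pi / (1/2) = 2 * Real.pi by ring]
  exact inv_mul_cancel₀ (ne_of_gt (Real.sqrt_pos.2 (by positivity)))

lemma setInt_pos {s : Set ℝ} (hs : MeasurableSet s) (h : 0 < volume s) :
    0 < ∫ t in s, (Real.sqrt (2 * Real.pi))⁻¹ * Real.exp (-t ^ 2 / 2) := by
  rw [setIntegral_pos_iff_support_of_nonneg_ae]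
  · have : (Function.support fun t : ℝ =>
        (Real.sqrt (2 * Real.pi))⁻¹ * Real.exp (-t ^ 2 / 2)) = Set.univ := by
      ext t; simpa [Function.mem_support] using (gpdf_pos t).ne'
    rwa [this, Set.univ_inter]
  · exact Filter.Eventually.of_forall (fun t => (gpdf_pos t).le)
  · exact gpdf_integrable.integrableOn

lemma Phi_pos (x : ℝ) : 0 < Phi x := by
  apply setInt_pos measurableSet_Iic
  simp [Real.volume_Iic]

lemma Phi_lt_one (x : ℝ) : Phi x < 1 := by
  have h := intervalIntegral.integral_Iic_add_Ioi (b := x)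
    gpdf_integrable.integrableOn gpdf_integrable.integrableOn
  rw [gpdf_integral] at h
  have h2 : 0 < ∫ t in Set.Ioi x, (Real.sqrt (2 * Real.pi))⁻¹ * Real.exp (-t ^ 2 / 2) := by
    apply setInt_pos measurableSet_Ioi
    simp [Real.volume_Ioi]
  unfold Phi; linarith

lemma Phi_strictMono : StrictMono Phi := by
  intro x y hxy
  have hsplit : Phi y = Phi x
      + ∫ t in Set.Ioc x y, (Real.sqrt (2 * Real.pi))⁻¹ * Real.exp (-t ^ 2 / 2) := by
    unfold Phi
    rw [← setIntegral_union (Set.Iic_disjoint_Ioc le_rfl) measurableSet_Ioc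
      gpdf_integrable.integrableOn gpdf_integrable.integrableOn,
      Set.Iic_union_Ioc_eq_Iic hxy.le]
  have h2 : 0 < ∫ t in Set.Ioc x y, (Real.sqrt (2 * Real.pi))⁻¹ * Real.exp (-t ^ 2 / 2) := by
    apply setInt_pos measurableSet_Ioc
    rw [Real.volume_Ioc]
    simp [hxy]
  linarith

lemma Phi_injective : Function.Injective Phi := Phi_strictMono.injective

end PhiLemmas

section CE
open Real

lemma ce_lemma {a b : ℝ} (ha : 0 < a) (ha1 : a < 1) (hb : 0 < b) (hb1 : b < 1) :
    a * log b + (1 - a) * log (1 - b) ≤ a * log a + (1 - a) * log (1 - a)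
    ∧ (b ≠ a → a * log b + (1 - a) * log (1 - b) < a * log a + (1 - a) * log (1 - a)) := by
  have ha' : (0:ℝ) < 1 - a := by linarith
  have hb' : (0:ℝ) < 1 - b := by linarith
  have h2 : log (1 - b) - log (1 - a) ≤ (1 - b) / (1 - a) - 1 := by
    rw [← Real.log_div hb'.ne' ha'.ne']
    exact Real.log_le_sub_one_of_pos (div_pos hb' ha')
  have e1 : a * (b / a - 1) = b - a := by
    rw [mul_sub, mul_div_cancel₀ _ ha.ne']; ring
  have e2 : (1 - a) * ((1 - b) / (1 - a) - 1) = a - b := by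
    rw [mul_sub, mul_div_cancel₀ _ ha'.ne']; ring
  constructor
  · have h1 : log b - log a ≤ b / a - 1 := by
      rw [← Real.log_div hb.ne' ha.ne']
      exact Real.log_le_sub_one_of_pos (div_pos hb ha)
    nlinarith [mul_le_mul_of_nonneg_left h1 ha.le, mul_le_mul_of_nonneg_left h2 ha'.le]
  · intro hne
    have h1 : log b - log a < b / a - 1 := by
      rw [← Real.log_div hb.ne' ha.ne']
      exact Real.log_lt_sub_one_of_pos (div_pos hb ha)
        (fun h => hne ((div_eq_one_iff_eq ha.ne').mp h))
    nlinarith [mul_lt_mul_of_pos_left h1 ha, mul_le_mul_of_nonneg_left h2 ha'.le]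

lemma factor_sum {n : ℕ} (w : Fin n → Bool → ℝ) (hw : ∀ j, w j false + w j true = 1)
    (f : Bool → ℝ) (i : Fin n) :
    ∑ sbar : Fin n → Bool, (∏ j, w j (sbar j)) * f (sbar i)
      = w i true * f true + w i false * f false := by
  have key : ∀ sbar : Fin n → Bool, (∏ j, w j (sbar j)) * f (sbar i)
      = ∏ j, (w j (sbar j) * (if j = i then f (sbar j) else 1)) := by
    intro sbar
    rw [Finset.prod_mul_distrib]
    congr 1
    rw [Finset.prod_ite_eq' Finset.univ i (fun j => f (sbar j))]
    simp
  simp_rw [key]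
  calc ∑ sbar : Fin n → Bool, ∏ j, (w j (sbar j) * (if j = i then f (sbar j) else 1))
      = ∑ sbar ∈ Fintype.piFinset (fun _ : Fin n => (Finset.univ : Finset Bool)),
          ∏ j, (w j (sbar j) * (if j = i then f (sbar j) else 1)) := by
        rw [Fintype.piFinset_univ]
    _ = ∏ j, ∑ b : Bool, (w j b * (if j = i then f b else 1)) :=
        (Finset.prod_univ_sum (fun _ => Finset.univ)
          (fun j b => w j b * if j = i then f b else 1)).symm
    _ = w i true * f true + w i false * f false := by
        have : ∀ j, (∑ b : Bool, w j b * (if j = i then f b else 1))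
            = if j = i then w i true * f true + w i false * f false else 1 := by
          intro j
          by_cases h : j = i
          · subst h; simp [Fintype.sum_bool]
          · simp only [h, if_false, mul_one, Fintype.sum_bool]
            linarith [hw j]
        simp_rw [this]
        simp

end CE

/-- the linear predictor -/
noncomputable def Xv {n : ℕ} (A : Matrix (Fin n) (Fin n) ℝ) (c : Fin n → ℝ)
    (i : Fin n) (s : Fin n → Bool) : ℝ :=
  c i - ∑ j, A i j * (if s j then (1 : ℝ) else 0)

theorem stmt14 {n : ℕ} (hn : 2 ≤ n)
    (Astar : Matrix (Fin n) (Fin n) ℝ) (cstar : Fin n → ℝ)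
    (P : (Fin n → Bool) → (Fin n → Bool) → ℝ)
    (hP : ∀ u s, P u s =
      ∏ i, (if s i then 1 - Phi (cstar i - ∑ j, Astar i j * (if u j then (1 : ℝ) else 0))
            else Phi (cstar i - ∑ j, Astar i j * (if u j then (1 : ℝ) else 0))))
    (π : (Fin n → Bool) → ℝ) (hπ : ∀ s, 0 < π s) (hπsum : ∑ s, π s = 1)
    (hspan : Submodule.span ℝ
      {v : Fin (n + 1) → ℝ | ∃ s : Fin n → Bool,
        v = Fin.snoc (fun j => if s j then (1 : ℝ) else 0) 1} = ⊤) :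
    ∀ (A : Matrix (Fin n) (Fin n) ℝ) (c : Fin n → ℝ),
      (A, c) ≠ (Astar, cstar) → crit π P A c < crit π P Astar cstar := by
  intro A c hne
  -- Step 1: rewrite the criterion.
  have crit_eq : ∀ (B : Matrix (Fin n) (Fin n) ℝ) (d : Fin n → ℝ),
      crit π P B d = ∑ s : Fin n → Bool, π s *
        ∑ i, (Phi (Xv Astar cstar i s) * Real.log (Phi (Xv B d i s))
          + (1 - Phi (Xv Astar cstar i s)) * Real.log (1 - Phi (Xv B d i s))) := by
    intro B d
    unfold crit
    refine Finset.sum_congr rfl fun s _ => ?_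
    have inner : ∀ sbar : Fin n → Bool, π s * P s sbar *
        (∑ i, (if sbar i then Real.log (1 - Phi (d i - ∑ j, B i j * (if s j then (1:ℝ) else 0)))
          else Real.log (Phi (d i - ∑ j, B i j * (if s j then (1:ℝ) else 0)))))
        = π s * (P s sbar * ∑ i, (if sbar i then Real.log (1 - Phi (Xv B d i s))
            else Real.log (Phi (Xv B d i s)))) := by
      intro sbar; rw [mul_assoc]; rfl
    simp_rw [inner]
    rw [← Finset.mul_sum]
    congr 1
    have swap : ∑ sbar : Fin n → Bool, P s sbar *
        ∑ i, (if sbar i then Real.log (1 - Phi (Xv B d i s))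
          else Real.log (Phi (Xv B d i s)))
        = ∑ i, ∑ sbar : Fin n → Bool, P s sbar *
          (if sbar i then Real.log (1 - Phi (Xv B d i s))
            else Real.log (Phi (Xv B d i s))) := by
      simp_rw [Finset.mul_sum]
      exact Finset.sum_comm
    rw [swap]
    refine Finset.sum_congr rfl fun i _ => ?_
    have hfact := factor_sum
      (fun j b => if b then 1 - Phi (Xv Astar cstar j s) else Phi (Xv Astar cstar j s))
      (fun j => by simp)
      (fun b => if b then Real.log (1 - Phi (Xv B d i s)) else Real.log (Phi (Xv B d i s))) i
    have hPs : ∀ sbar : Fin n → Bool, P s sbar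
        = ∏ j, (if sbar j then 1 - Phi (Xv Astar cstar j s) else Phi (Xv Astar cstar j s)) := by
      intro sbar; rw [hP s sbar]; rfl
    simp_rw [hPs]
    rw [hfact]
    simp only [reduceIte, Bool.false_eq_true, if_true, if_false]
    ring
  rw [crit_eq A c, crit_eq Astar cstar]
  -- Step 2: find a witness where the predictors differ.
  have hwit : ∃ (i : Fin n) (s : Fin n → Bool), Xv A c i s ≠ Xv Astar cstar i s := by
    by_contra hcon
    push_neg at hcon
    apply hne
    have hrow : ∀ i : Fin n, A i = Astar i ∧ c i = cstar i := by
      intro i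
      set dvec : Fin (n + 1) → ℝ :=
        Fin.snoc (fun j => Astar i j - A i j) (c i - cstar i) with hdvec
      set φ : (Fin (n + 1) → ℝ) →ₗ[ℝ] ℝ :=
        ∑ k, dvec k • (LinearMap.proj k : ((Fin (n+1)) → ℝ) →ₗ[ℝ] ℝ) with hφ
      have φ_apply : ∀ v, φ v = ∑ k, dvec k * v k := by
        intro v
        simp [hφ, LinearMap.sum_apply, LinearMap.smul_apply, smul_eq_mul]
      have hker : {v : Fin (n + 1) → ℝ | ∃ s : Fin n → Bool,
          v = Fin.snoc (fun j => if s j then (1 : ℝ) else 0) 1} ⊆ (LinearMap.ker φ : Set _) := by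
        rintro v ⟨s, rfl⟩
        have h0 := hcon i s
        simp only [SetLike.mem_coe, LinearMap.mem_ker]
        rw [φ_apply, Fin.sum_univ_castSucc]
        simp only [hdvec, Fin.snoc_castSucc, Fin.snoc_last, mul_one]
        have : ∑ j : Fin n, (Astar i j - A i j) * (if s j then (1:ℝ) else 0)
            = (Xv A c i s - Xv Astar cstar i s) - (c i - cstar i) := by
          unfold Xv
          simp only [sub_mul]
          rw [Finset.sum_sub_distrib]
          ring
        rw [this, h0]; ring
      have hker' : (⊤ : Submodule ℝ (Fin (n+1) → ℝ)) ≤ LinearMap.ker φ := by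
        rw [← hspan]; exact Submodule.span_le.mpr hker
      have hzero : ∀ v, φ v = 0 := fun v => hker' (Submodule.mem_top) 
      have hd : ∀ k, dvec k = 0 := by
        intro k
        have := hzero (Pi.single k 1)
        rw [φ_apply] at this
        simpa [Pi.single_apply, mul_ite, Finset.sum_ite_eq'] using this
      constructor
      · funext j
        have := hd (Fin.castSucc j)
        simp only [hdvec, Fin.snoc_castSucc] at this
        linarith
      · have := hd (Fin.last n)
        simp only [hdvec, Fin.snoc_last] at this
        linarith
    have hA : A = Astar := by
      ext i j; rw [(hrow i).1]
    have hc : c = cstar := funext fun i => (hrow i).2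
    rw [hA, hc]
  obtain ⟨i₀, s₀, hdiff⟩ := hwit
  -- Step 3: sum of strict cross-entropy inequalities.
  have bounds : ∀ (B : Matrix (Fin n) (Fin n) ℝ) (d : Fin n → ℝ) (i : Fin n) (s : Fin n → Bool),
      0 < Phi (Xv B d i s) ∧ Phi (Xv B d i s) < 1 :=
    fun B d i s => ⟨Phi_pos _, Phi_lt_one _⟩
  have term_le : ∀ (s : Fin n → Bool) (i : Fin n),
      Phi (Xv Astar cstar i s) * Real.log (Phi (Xv A c i s))
        + (1 - Phi (Xv Astar cstar i s)) * Real.log (1 - Phi (Xv A c i s))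
      ≤ Phi (Xv Astar cstar i s) * Real.log (Phi (Xv Astar cstar i s))
        + (1 - Phi (Xv Astar cstar i s)) * Real.log (1 - Phi (Xv Astar cstar i s)) :=
    fun s i => (ce_lemma (Phi_pos _) (Phi_lt_one _) (Phi_pos _) (Phi_lt_one _)).1
  apply Finset.sum_lt_sum
  · intro s _
    exact mul_le_mul_of_nonneg_left
      (Finset.sum_le_sum fun i _ => term_le s i) (hπ s).le
  · refine ⟨s₀, Finset.mem_univ _, ?_⟩
    apply mul_lt_mul_of_pos_left _ (hπ s₀)
    apply Finset.sum_lt_sum (fun i _ => term_le s₀ i)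
    refine ⟨i₀, Finset.mem_univ _, ?_⟩
    exact (ce_lemma (Phi_pos _) (Phi_lt_one _) (Phi_pos _) (Phi_lt_one _)).2
      (fun h => hdiff (Phi_injective h))
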